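/- Let a, b, c be the tree automorphisms of the binary tree defined by the wreath recursions a = σ(b,a), b = (c,c), c = (a,a) (automaton number 803). Then c·b·a² = 1, the group generated by a, b, c equals the subgroup generated by a and c, and it is free abelian of rank 2 with basis {a, c}; in particular G₈₀₃ ≅ ℤ² and a^{2m}cⁿ = 1 only when m = n = 0. -/

import Mathlib

/-- An invertible automaton over the two-letter alphabet `Bool`:
a set of states `Q`, a transition map and an output map such that each state
acts on the alphabet by a permutation. -/
structure BinAutomaton (Q : Type*) where
  trans : Q → Bool → Q
  out : Q → Bool → Bool
  out_bij : ∀ q, Function.Bijective (out q)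

namespace BinAutomaton

variable {Q : Type*} (A : BinAutomaton Q)

/-- The action of a state on finite binary words:
`q(xw) = ρ(q,x) · (τ(q,x))(w)`. -/
def act : Q → List Bool → List Bool
  | _, [] => []
  | q, x :: w => A.out q x :: act (A.trans q x) w

theorem act_injective (q : Q) : Function.Injective (A.act q) := by
  intro u
  induction u generalizing q with
  | nil =>
    intro v h
    cases v with
    | nil => rfl
    | cons y v => simp [act] at h
  | cons x u ih =>
    intro v h
    cases v with
    | nil => simp [act] at h
    | cons y v =>
      simp only [act, List.cons.injEq] at h
      obtain ⟨h1, h2⟩ := h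
      obtain rfl : x = y := (A.out_bij q).1 h1
      rw [ih _ h2]

theorem act_surjective (q : Q) : Function.Surjective (A.act q) := by
  intro v
  induction v generalizing q with
  | nil => exact ⟨[], rfl⟩
  | cons y v ih =>
    obtain ⟨x, hx⟩ := (A.out_bij q).2 y
    obtain ⟨w, hw⟩ := ih (A.trans q x)
    exact ⟨x :: w, by simp [act, hx, hw]⟩

/-- The tree automorphism defined by the state `q`. -/
noncomputable def perm (q : Q) : Equiv.Perm (List Bool) :=
  Equiv.ofBijective (A.act q) ⟨A.act_injective q, A.act_surjective q⟩

/-- The group generated by the automaton: the subgroup of the group of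
bijections of the binary tree generated by the states. -/
noncomputable def autGroup : Subgroup (Equiv.Perm (List Bool)) :=
  Subgroup.closure (Set.range A.perm)

end BinAutomaton

/-- Helper constructing a 3-state automaton from the sections at `0`, the
sections at `1`, and the activity of each state. -/
def mkAut3 (t0 t1 : Fin 3 → Fin 3) (actv : Fin 3 → Bool) : BinAutomaton (Fin 3) where
  trans q x := cond x (t1 q) (t0 q)
  out q x := xor (actv q) x
  out_bij q := by
    have h : ∀ b : Bool, Function.Bijective fun x => xor b x := by decide
    exact h (actv q)

/-- Automaton number 803:
`a = σ(b,a)`, `b = (c,c)`, `c = (a,a)` (states `0 = a`, `1 = b`, `2 = c`). -/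
def A803 : BinAutomaton (Fin 3) :=
  mkAut3 ![1, 2, 0] ![0, 2, 0] ![true, false, false]

noncomputable def a : Equiv.Perm (List Bool) := A803.perm 0
noncomputable def b : Equiv.Perm (List Bool) := A803.perm 1
noncomputable def c : Equiv.Perm (List Bool) := A803.perm 2
namespace Aut803

open BinAutomaton

lemma act0_false (w : List Bool) : A803.act 0 (false :: w) = true :: A803.act 1 w := rfl
lemma act0_true (w : List Bool) : A803.act 0 (true :: w) = false :: A803.act 0 w := rfl
lemma act1_cons (x : Bool) (w : List Bool) : A803.act 1 (x :: w) = x :: A803.act 2 w := by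
  cases x <;> rfl
lemma act2_cons (x : Bool) (w : List Bool) : A803.act 2 (x :: w) = x :: A803.act 0 w := by
  cases x <;> rfl

lemma comm_acts (w : List Bool) :
    A803.act 1 (A803.act 0 w) = A803.act 0 (A803.act 1 w) ∧
    A803.act 2 (A803.act 0 w) = A803.act 0 (A803.act 2 w) ∧
    A803.act 2 (A803.act 1 w) = A803.act 1 (A803.act 2 w) := by
  induction w with
  | nil => exact ⟨rfl, rfl, rfl⟩
  | cons x w ih =>
    obtain ⟨h01, h02, h12⟩ := ih
    cases x <;>
      simp_all [act0_false, act0_true, act1_cons, act2_cons]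

lemma h01 (w : List Bool) : A803.act 1 (A803.act 0 w) = A803.act 0 (A803.act 1 w) :=
  (comm_acts w).1
lemma h02 (w : List Bool) : A803.act 2 (A803.act 0 w) = A803.act 0 (A803.act 2 w) :=
  (comm_acts w).2.1
lemma h12 (w : List Bool) : A803.act 2 (A803.act 1 w) = A803.act 1 (A803.act 2 w) :=
  (comm_acts w).2.2

lemma rel_act (w : List Bool) :
    A803.act 0 (A803.act 0 (A803.act 1 (A803.act 2 w))) = w := by
  induction w with
  | nil => rfl
  | cons x w ih =>
    cases x <;>
      simp [act0_false, act0_true, act1_cons, act2_cons, h01, h02, h12, ih]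

lemma a_apply (w : List Bool) : a w = A803.act 0 w := rfl
lemma b_apply (w : List Bool) : b w = A803.act 1 w := rfl
lemma c_apply (w : List Bool) : c w = A803.act 2 w := rfl

lemma hab : Commute a b := Equiv.ext fun w => (h01 w).symm
lemma hac : Commute a c := Equiv.ext fun w => (h02 w).symm
lemma hbc : Commute b c := Equiv.ext fun w => (h12 w).symm

lemma rel1 : a ^ 2 * b * c = 1 := by
  apply Equiv.ext
  intro w
  have : (a ^ 2 * b * c) w = A803.act 0 (A803.act 0 (A803.act 1 (A803.act 2 w))) := by
    rw [sq]; rfl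
  rw [this, rel_act]; rfl

/-- The subgroup of pairs `(g, h)` with `g(x·w) = x·h(w)`. -/
def S : Subgroup (Equiv.Perm (List Bool) × Equiv.Perm (List Bool)) where
  carrier := {p | ∀ x (w : List Bool), p.1 (x :: w) = x :: p.2 w}
  one_mem' := fun _ _ => rfl
  mul_mem' := by
    intro p q hp hq x w
    have : (p * q).1 (x :: w) = p.1 (q.1 (x :: w)) := rfl
    rw [this, hq, hp]; rfl
  inv_mem' := by
    intro p hp x w
    apply p.1.injective
    have h1 : p.1 (p⁻¹.1 (x :: w)) = x :: w := Equiv.apply_symm_apply p.1 _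
    have h2 : p.2 (p⁻¹.2 w) = w := Equiv.apply_symm_apply p.2 _
    rw [h1, hp x (p⁻¹.2 w), h2]

lemma haa_mem : ((a * a, a * b) : _ × _) ∈ S := by
  intro x w
  cases x
  · rfl
  · exact congrArg (List.cons true) (h01 w)
lemma hc_mem : ((c, a) : _ × _) ∈ S := by
  intro x w; cases x <;> rfl

lemma S_snd_one {h : Equiv.Perm (List Bool)} (hm : ((1 : Equiv.Perm (List Bool)), h) ∈ S) :
    h = 1 := by
  apply Equiv.ext
  intro w
  have := hm false w
  simpa using this.symm

lemma pair_mem (m n : ℤ) : ((a ^ (m + m) * c ^ n, (a * b) ^ m * a ^ n) : _ × _) ∈ S := by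
  have hmem := S.mul_mem (S.zpow_mem haa_mem m) (S.zpow_mem hc_mem n)
  have e : ((a * a, a * b) : _ × _) ^ m * (c, a) ^ n
      = (a ^ (m + m) * c ^ n, (a * b) ^ m * a ^ n) := by
    have e1 : (((a * a, a * b) : _ × _) ^ m * (c, a) ^ n).1 = (a * a) ^ m * c ^ n := rfl
    have e2 : (((a * a, a * b) : _ × _) ^ m * (c, a) ^ n).2 = (a * b) ^ m * a ^ n := rfl
    have e3 : (a * a) ^ m = a ^ (m + m) := by
      rw [(Commute.refl a).mul_zpow, ← zpow_add]
    exact Prod.ext (e1.trans (by rw [e3])) e2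
  rwa [e] at hmem

lemma fix1 {g : Equiv.Perm (List Bool)} (hg : ∀ x : Bool, g [x] = [x]) (n : ℤ) (x : Bool) :
    (g ^ n) [x] = [x] :=
  Function.IsFixedPt.perm_zpow (hg x) n

lemma step (m n : ℤ) (h : a ^ (m + m) * c ^ n = 1) : a ^ (n - m) * c ^ (-m) = 1 := by
  have hmem := pair_mem m n
  rw [h] at hmem
  have h2 : (a * b) ^ m * a ^ n = 1 := S_snd_one hmem
  -- a * b = a⁻¹ * c⁻¹
  have hb : a * b = a⁻¹ * c⁻¹ := by
    have := rel1
    rw [sq] at this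
    calc a * b = a⁻¹ * (a * a * b * c) * c⁻¹ := by group
    _ = a⁻¹ * c⁻¹ := by rw [this]; group
  rw [hb] at h2
  have hic : Commute a⁻¹ c⁻¹ := hac.inv_inv
  rw [hic.mul_zpow, inv_zpow, inv_zpow, ← zpow_neg, ← zpow_neg] at h2
  rw [mul_assoc, ← (hac.zpow_zpow n (-m)).eq, ← mul_assoc, ← zpow_add] at h2
  have he : n - m = -m + n := by ring
  rw [he]
  exact h2

lemma free_aux : ∀ (k : ℕ) (m n : ℤ),
    (m ^ 2 + (m - n) ^ 2 + 3 * n ^ 2).toNat ≤ k → a ^ m * c ^ n = 1 → m = 0 ∧ n = 0 := by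
  intro k
  induction k with
  | zero =>
    intro m n hk _
    have h0 : m ^ 2 + (m - n) ^ 2 + 3 * n ^ 2 ≤ 0 := by omega
    constructor
    · nlinarith [sq_nonneg m, sq_nonneg (m - n), sq_nonneg n]
    · nlinarith [sq_nonneg m, sq_nonneg (m - n), sq_nonneg n]
  | succ k ih =>
    intro m n hk h
    -- m is even
    rcases Int.even_or_odd m with ⟨m', rfl⟩ | ⟨m', rfl⟩
    · -- even case
      by_cases hQ0 : (m' + m') ^ 2 + ((m' + m') - n) ^ 2 + 3 * n ^ 2 = 0
      · constructor
        · nlinarith [sq_nonneg (m' + m'), sq_nonneg ((m' + m') - n), sq_nonneg n]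
        · nlinarith [sq_nonneg (m' + m'), sq_nonneg ((m' + m') - n), sq_nonneg n]
      · have key := step m' n h
        have hhalf : 2 * ((n - m') ^ 2 + ((n - m') - (-m')) ^ 2 + 3 * (-m') ^ 2)
            = (m' + m') ^ 2 + ((m' + m') - n) ^ 2 + 3 * n ^ 2 := by ring
        have hpos : (0:ℤ) ≤ (n - m') ^ 2 + ((n - m') - (-m')) ^ 2 + 3 * (-m') ^ 2 := by
          positivity
        have hk' : ((n - m') ^ 2 + ((n - m') - (-m')) ^ 2 + 3 * (-m') ^ 2).toNat ≤ k := by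
          omega
        obtain ⟨h1, h2⟩ := ih (n - m') (-m') hk' key
        omega
    · -- odd case: contradiction
      exfalso
      have hfa : ∀ x : Bool, (a * a) [x] = [x] := fun x => by cases x <;> rfl
      have hfc : ∀ x : Bool, c [x] = [x] := fun x => by cases x <;> rfl
      have heval : (a ^ (2 * m' + 1) * c ^ n) [false] = [false] := by rw [h]; rfl
      have hsplit : a ^ (2 * m' + 1) = (a * a) ^ m' * a := by
        have he : 2 * m' + 1 = m' + m' + 1 := by ring
        rw [he, zpow_add, zpow_one, (Commute.refl a).mul_zpow, ← zpow_add]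
      rw [Equiv.Perm.mul_apply, fix1 hfc n false, hsplit, Equiv.Perm.mul_apply] at heval
      have : a [false] = [true] := rfl
      rw [this, fix1 hfa m' true] at heval
      simp at heval

lemma free (m n : ℤ) (h : a ^ m * c ^ n = 1) : m = 0 ∧ n = 0 :=
  free_aux (m ^ 2 + (m - n) ^ 2 + 3 * n ^ 2).toNat m n le_rfl h

/-- The homomorphism `ℤ² → Perm` sending `(m, n)` to `aᵐcⁿ`. -/
noncomputable def φ : Multiplicative ℤ × Multiplicative ℤ →* Equiv.Perm (List Bool) where
  toFun p := a ^ p.1.toAdd * c ^ p.2.toAdd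
  map_one' := by simp
  map_mul' p q := by
    show a ^ (p.1.toAdd + q.1.toAdd) * c ^ (p.2.toAdd + q.2.toAdd)
        = a ^ p.1.toAdd * c ^ p.2.toAdd * (a ^ q.1.toAdd * c ^ q.2.toAdd)
    rw [zpow_add, zpow_add]
    have hsw : c ^ p.2.toAdd * a ^ q.1.toAdd = a ^ q.1.toAdd * c ^ p.2.toAdd :=
      ((hac.zpow_zpow q.1.toAdd p.2.toAdd).eq).symm
    calc a ^ p.1.toAdd * a ^ q.1.toAdd * (c ^ p.2.toAdd * c ^ q.2.toAdd)
        = a ^ p.1.toAdd * (a ^ q.1.toAdd * c ^ p.2.toAdd) * c ^ q.2.toAdd := by group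
      _ = a ^ p.1.toAdd * (c ^ p.2.toAdd * a ^ q.1.toAdd) * c ^ q.2.toAdd := by rw [hsw]
      _ = a ^ p.1.toAdd * c ^ p.2.toAdd * (a ^ q.1.toAdd * c ^ q.2.toAdd) := by group

lemma φ_inj : Function.Injective φ := by
  apply (injective_iff_map_eq_one φ).mpr
  rintro ⟨u, v⟩ hx
  obtain ⟨h1, h2⟩ := free u.toAdd v.toAdd hx
  have : u = 1 ∧ v = 1 := ⟨toAdd_eq_zero.mp h1, toAdd_eq_zero.mp h2⟩
  simp [Prod.ext_iff, this.1, this.2]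

lemma φ_range : φ.range = Subgroup.closure {a, c} := by
  apply le_antisymm
  · rintro g ⟨⟨u, v⟩, rfl⟩
    have h : φ (u, v) = a ^ u.toAdd * c ^ v.toAdd := rfl
    rw [h]
    have ha : (a : Equiv.Perm (List Bool)) ∈ Subgroup.closure {a, c} :=
      Subgroup.subset_closure (Set.mem_insert _ _)
    have hc : (c : Equiv.Perm (List Bool)) ∈ Subgroup.closure {a, c} :=
      Subgroup.subset_closure (Set.mem_insert_of_mem _ rfl)
    exact mul_mem (zpow_mem ha _) (zpow_mem hc _)
  · rw [Subgroup.closure_le]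
    rintro g hg
    rcases hg with rfl | rfl
    · exact ⟨(Multiplicative.ofAdd 1, 1), by simp [φ]⟩
    · exact ⟨(1, Multiplicative.ofAdd 1), by simp [φ]⟩

lemma rel1' : c * b * a ^ 2 = 1 := by
  have h1 : Commute (c * b) (a ^ 2) := (hac.symm.mul_left hab.symm).pow_right 2
  rw [h1.eq, ← hbc.eq, ← mul_assoc, rel1]

lemma closure_eq : Subgroup.closure {a, b, c} = Subgroup.closure {a, c} := by
  apply le_antisymm
  · rw [Subgroup.closure_le]
    rintro g hg
    rcases hg with rfl | rfl | rfl
    · exact Subgroup.subset_closure (Set.mem_insert _ _)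
    · have hb : b = c⁻¹ * (a ^ 2)⁻¹ := by
        have := rel1'
        calc b = c⁻¹ * (c * b * a ^ 2) * (a ^ 2)⁻¹ := by group
        _ = c⁻¹ * (a ^ 2)⁻¹ := by rw [this]; group
      rw [hb]
      exact mul_mem (inv_mem (Subgroup.subset_closure (Set.mem_insert_of_mem _ rfl)))
        (inv_mem (pow_mem (Subgroup.subset_closure (Set.mem_insert _ _)) 2))
    · exact Subgroup.subset_closure (Set.mem_insert_of_mem _ rfl)
  · apply Subgroup.closure_mono
    rintro g hg
    rcases hg with rfl | rfl
    · exact Set.mem_insert _ _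
    · exact Set.mem_insert_of_mem _ (Set.mem_insert_of_mem _ rfl)

end Aut803
/-- The group generated by automaton 803 is free abelian of rank 2 with basis
`{a, c}`: one has `c·b·a² = 1`, the whole group is generated by `a` and `c`,
`a` and `c` commute, `aᵐcⁿ = 1` only for `m = n = 0` (in particular
`a^{2m}cⁿ = 1` only for `m = n = 0`), and the group is isomorphic to `ℤ²`. -/
theorem automaton803_group_is_Z2 :
    c * b * a ^ 2 = 1 ∧
    Subgroup.closure {a, b, c} = Subgroup.closure {a, c} ∧
    Commute a c ∧
    (∀ m n : ℤ, a ^ m * c ^ n = 1 → m = 0 ∧ n = 0) ∧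
    (∀ m n : ℤ, a ^ (2 * m) * c ^ n = 1 → m = 0 ∧ n = 0) ∧
    Nonempty (↥(Subgroup.closure {a, b, c}) ≃*
      (Multiplicative ℤ × Multiplicative ℤ)) := by
  refine ⟨Aut803.rel1', Aut803.closure_eq, Aut803.hac, Aut803.free, ?_, ?_⟩
  · intro m n h
    obtain ⟨h1, h2⟩ := Aut803.free (2 * m) n h
    exact ⟨by omega, h2⟩
  · have e1 : Subgroup.closure {a, b, c} = Aut803.φ.range := by
      rw [Aut803.closure_eq, Aut803.φ_range]
    exact ⟨(MulEquiv.subgroupCongr e1).trans (MonoidHom.ofInjective Aut803.φ_inj).symm⟩
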